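/- arXiv:1106.4354 — 6 statements merged into one kernel-verified Lean document; each statement's English description precedes it below -/
import Mathlib

section
/- Consider a short exact sequence 0 → M → E → K → 0 of finite dimensional modules over A = K[t]/(t^p), with K the trivial one-dimensional module. The sequence splits if and only if the Jordan type of E equals the Jordan type of M plus one extra block [1]. -/
/-!
A section `s : K → E` with `t • s = 0` exhibits `E ≅ M ⊕ [1]` as `A`-modules, so the Jordan type of
`E` is that of `M` plus `[1]`. Conversely, the number of Jordan blocks is `dim ker t`. If `E` has
one block more than `M`, then `dim ker t_E > dim ker t_M = dim (M ∩ ker t_E)`, so some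
`v ∈ ker t_E` lies outside `M`, and `K v` is an `A`-submodule mapping isomorphically onto `K`.
-/

/-- Index type for the canonical Jordan-form model over `k[t]/(t^p)`:
a block of size `i+1` (so sizes `1,…,p`), a copy index below the multiplicity
`a (i+1)`, and a position inside the block. -/
abbrev JordanIdx (p : ℕ) (a : ℕ → ℕ) : Type :=
  Σ i : Fin p, Fin (a ((i : ℕ) + 1)) × Fin ((i : ℕ) + 1)

/-- Carrier of the canonical Jordan model with block multiplicities `a`. -/
abbrev JordanCarrier (k : Type*) (p : ℕ) (a : ℕ → ℕ) : Type _ := JordanIdx p a → k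

/-- The shift operator (multiplication by `t`) on the canonical Jordan model. -/
def jordanShift (k : Type*) [Field k] (p : ℕ) (a : ℕ → ℕ) :
    JordanCarrier k p a →ₗ[k] JordanCarrier k p a where
  toFun g x :=
    if h : (x.2.2 : ℕ) + 1 < (x.1 : ℕ) + 1 then g ⟨x.1, x.2.1, ⟨(x.2.2 : ℕ) + 1, h⟩⟩ else 0
  map_add' g₁ g₂ := by funext x; dsimp; split <;> simp
  map_smul' c g := by funext x; dsimp; split <;> simp

/-- A `p`-nilpotent endomorphism `f` of `V` gives `V` the structure of a
`k[t]/(t^p)`-module; it has Jordan type `∑ᵢ a i [i]` if `(V, f)` is isomorphic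
to the canonical Jordan model with multiplicities `a`. -/
def HasJordanType {k V : Type*} [Field k] [AddCommGroup V] [Module k V]
    (p : ℕ) (f : V →ₗ[k] V) (a : ℕ → ℕ) : Prop :=
  ∃ e : V ≃ₗ[k] JordanCarrier k p a, ∀ v, e (f v) = jordanShift k p a (e v)

section JordanType

variable {k V W : Type*} [Field k] [AddCommGroup V] [Module k V] [AddCommGroup W] [Module k W]
  {p : ℕ} {a : ℕ → ℕ} {f : V →ₗ[k] V} {g : W →ₗ[k] W}

lemma HasJordanType.of_linearEquiv (hg : HasJordanType p g a) (e : V ≃ₗ[k] W)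
    (he : ∀ v, e (f v) = g (e v)) : HasJordanType p f a := by
  obtain ⟨e', he'⟩ := hg
  exact ⟨e.trans e', fun v => by simp [he, he']⟩

lemma HasJordanType.finrank_ker (hf : HasJordanType p f a) :
    Module.finrank k (LinearMap.ker f) = Module.finrank k (LinearMap.ker (jordanShift k p a)) := by
  obtain ⟨e, he⟩ := hf
  have hconj : f = e.symm.toLinearMap ∘ₗ jordanShift k p a ∘ₗ e.toLinearMap := by
    ext v; simp [← he]
  rw [hconj, LinearEquiv.ker_comp, LinearMap.ker_comp, Submodule.comap_equiv_eq_map_symm,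
    LinearEquiv.finrank_map_eq]

lemma finrank_ker_prodMap_zero [FiniteDimensional k V] (f : V →ₗ[k] V) :
    Module.finrank k (LinearMap.ker (f.prodMap (0 : k →ₗ[k] k))) =
      Module.finrank k (LinearMap.ker f) + 1 := by
  have hker : LinearMap.ker (f.prodMap (0 : k →ₗ[k] k)) =
      LinearMap.range ((LinearMap.ker f).subtype.prodMap (LinearMap.id : k →ₗ[k] k)) := by
    rw [LinearMap.ker_prodMap, LinearMap.range_prodMap, Submodule.range_subtype,
      LinearMap.ker_zero, LinearMap.range_id]
  rw [hker, LinearMap.finrank_range_of_inj, Module.finrank_prod, Module.finrank_self]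
  exact Prod.map_injective.mpr ⟨Subtype.val_injective, Function.injective_id⟩

end JordanType

section AddBlock

variable (k : Type*) [Field k] {p : ℕ} (a : ℕ → ℕ)

/-- The extra block `[1]` is the copy of index `a 1` among the blocks of size `1`. -/
def jordanCarrierProdEquiv (hp : 0 < p) :
    (JordanCarrier k p a × k) ≃ₗ[k]
      JordanCarrier k p (fun i => if i = 1 then a 1 + 1 else a i) where
  toFun gc x := if h : (x.2.1 : ℕ) < a (x.1 + 1) then gc.1 ⟨x.1, ⟨x.2.1, h⟩, x.2.2⟩ else gc.2
  invFun g :=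
    (fun x => g ⟨x.1, Fin.castLE (by dsimp only; split_ifs with h <;> simp [h]) x.2.1, x.2.2⟩,
      g ⟨⟨0, hp⟩, ⟨a 1, by simp⟩, 0⟩)
  map_add' _ _ := by funext x; simp only [Pi.add_apply]; split <;> rfl
  map_smul' _ _ := by funext x; simp only [Pi.smul_apply]; split <;> rfl
  left_inv gc := by ext x <;> simp
  right_inv g := by
    funext ⟨⟨i, hi⟩, ⟨c, hc⟩, ⟨j, hj⟩⟩
    have hc' : c < if i + 1 = 1 then a 1 + 1 else a (i + 1) := hc
    have hj' : j < i + 1 := hj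
    by_cases h : c < a (i + 1)
    · simp only [dif_pos h]; rfl
    · obtain rfl : i = 0 := by
        by_contra h0
        rw [if_neg (by omega)] at hc'
        exact h hc'
      obtain rfl : c = a 1 := by simp at hc' h; omega
      obtain rfl : j = 0 := by omega
      simp only [dif_neg h]; rfl

lemma jordanShift_jordanCarrierProdEquiv (hp : 0 < p) (g : JordanCarrier k p a) (c : k) :
    jordanShift k p (fun i => if i = 1 then a 1 + 1 else a i)
        (jordanCarrierProdEquiv k a hp (g, c)) =
      jordanCarrierProdEquiv k a hp (jordanShift k p a g, 0) := by
  funext ⟨⟨i, hi⟩, ⟨c', hc'⟩, ⟨j, hj⟩⟩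
  have hc_old : j + 1 < i + 1 → c' < a (i + 1) := by
    intro h
    have hc'' : c' < if i + 1 = 1 then a 1 + 1 else a (i + 1) := hc'
    rwa [if_neg (by omega)] at hc''
  simp only [jordanShift, jordanCarrierProdEquiv, LinearMap.coe_mk, AddHom.coe_mk,
    LinearEquiv.coe_mk]
  by_cases h : j + 1 < i + 1
  · simp [h, hc_old h]
  · simp [h]

variable {k a} {V : Type*} [AddCommGroup V] [Module k V] {f : V →ₗ[k] V}

lemma HasJordanType.prodMap_zero (hp : 0 < p) (hf : HasJordanType p f a) :
    HasJordanType p (f.prodMap (0 : k →ₗ[k] k)) (fun i => if i = 1 then a 1 + 1 else a i) := by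
  obtain ⟨e, he⟩ := hf
  refine ⟨(e.prodCongr (LinearEquiv.refl k k)).trans (jordanCarrierProdEquiv k a hp), fun v => ?_⟩
  simp [he, jordanShift_jordanCarrierProdEquiv]

end AddBlock

section Splitting

variable {R M N P : Type*} [Ring R] [AddCommGroup M] [Module R M] [AddCommGroup N] [Module R N]
  [AddCommGroup P] [Module R P] {f : M →ₗ[R] N} {g : N →ₗ[R] P}

lemma Function.Exact.exists_linearEquiv_prod_of_section (h : Function.Exact f g)
    (hf : Function.Injective f) {l : P →ₗ[R] N} (hl : g ∘ₗ l = LinearMap.id)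
    {fM : M →ₗ[R] M} {fN : N →ₗ[R] N} {fP : P →ₗ[R] P}
    (hfM : fN ∘ₗ f = f ∘ₗ fM) (hfP : fN ∘ₗ l = l ∘ₗ fP) :
    ∃ e : N ≃ₗ[R] M × P, ∀ x, e (fN x) = fM.prodMap fP (e x) := by
  let S := h.splitSurjectiveEquiv hf
  set e := (S ⟨l, hl⟩).1
  have he_inl : f = e.symm ∘ₗ LinearMap.inl R M P := (S ⟨l, hl⟩).2.1
  have he_inr : e.symm ∘ₗ LinearMap.inr R M P = l :=
    congrArg Subtype.val (S.symm_apply_apply ⟨l, hl⟩)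
  have he_symm : ∀ y : M × P, e.symm y = f y.1 + l y.2 := by
    intro y
    rw [he_inl, ← he_inr, LinearMap.comp_apply, LinearMap.comp_apply, ← map_add]
    simp
  refine ⟨e, fun x => ?_⟩
  obtain ⟨y, rfl⟩ := e.symm.surjective x
  rw [e.apply_symm_apply, ← e.eq_symm_apply, he_symm, he_symm, map_add]
  exact congrArg₂ (· + ·) (LinearMap.congr_fun hfM y.1) (LinearMap.congr_fun hfP y.2)

end Splitting

section SectionOfKernel

variable {K M E : Type*} [Field K] [AddCommGroup M] [Module K M] [FiniteDimensional K M]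
  [AddCommGroup E] [Module K E] {fM : M →ₗ[K] M} {fE : E →ₗ[K] E} {φ : M →ₗ[K] E}

lemma not_ker_le_range_of_finrank_ker_lt (hφ : Function.Injective φ) (hφf : fE ∘ₗ φ = φ ∘ₗ fM)
    (hlt : Module.finrank K (LinearMap.ker fM) < Module.finrank K (LinearMap.ker fE)) :
    ¬ LinearMap.ker fE ≤ LinearMap.range φ := by
  intro hle
  have hker : LinearMap.ker fE ≤ (LinearMap.ker fM).map φ := by
    intro v hv
    obtain ⟨m, rfl⟩ := hle hv
    refine ⟨m, hφ ?_, rfl⟩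
    rw [map_zero, ← LinearMap.comp_apply, ← hφf, LinearMap.comp_apply]
    exact hv
  have := (Submodule.finrank_mono hker).trans (Submodule.finrank_map_le φ _)
  omega

lemma exists_section_of_finrank_ker_lt (hφ : Function.Injective φ) (hφf : fE ∘ₗ φ = φ ∘ₗ fM)
    {ψ : E →ₗ[K] K} (hex : LinearMap.range φ = LinearMap.ker ψ)
    (hlt : Module.finrank K (LinearMap.ker fM) < Module.finrank K (LinearMap.ker fE)) :
    ∃ s : K →ₗ[K] E, ψ ∘ₗ s = LinearMap.id ∧ fE ∘ₗ s = 0 := by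
  obtain ⟨v, hv, hvψ⟩ :=
    SetLike.not_le_iff_exists.mp (not_ker_le_range_of_finrank_ker_lt hφ hφf hlt)
  rw [hex, LinearMap.mem_ker] at hvψ
  refine ⟨LinearMap.toSpanSingleton K E ((ψ v)⁻¹ • v), ?_, ?_⟩
  · ext; simp [inv_mul_cancel₀ hvψ]
  · ext; simp [LinearMap.mem_ker.mp hv]

end SectionOfKernel

theorem statement3_general {K M E : Type*} [Field K]
    [AddCommGroup M] [Module K M] [FiniteDimensional K M]
    [AddCommGroup E] [Module K E]
    {p : ℕ} (hp : p.Prime)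
    (fM : M →ₗ[K] M) (fE : E →ₗ[K] E)
    (φ : M →ₗ[K] E) (hφ : Function.Injective φ) (hφf : fE.comp φ = φ.comp fM)
    (ψ : E →ₗ[K] K)
    (hex : LinearMap.range φ = LinearMap.ker ψ)
    (a : ℕ → ℕ) (ha : HasJordanType p fM a) :
    (∃ s : K →ₗ[K] E, ψ.comp s = LinearMap.id ∧ fE.comp s = 0) ↔
      HasJordanType p fE (fun i => if i = 1 then a 1 + 1 else a i) := by
  have hMK := ha.prodMap_zero hp.pos
  constructor
  · rintro ⟨s, hs, hfs⟩
    obtain ⟨e, he⟩ := (LinearMap.exact_iff.mpr hex.symm).exists_linearEquiv_prod_of_section hφ hs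
      hφf (hfs.trans (LinearMap.comp_zero s).symm)
    exact hMK.of_linearEquiv e he
  · intro hE
    refine exists_section_of_finrank_ker_lt hφ hφf hex ?_
    rw [hE.finrank_ker, ← hMK.finrank_ker, finrank_ker_prodMap_zero]
    exact Nat.lt_succ_self _

/-- a short exact sequence `0 → M → E → K → 0` of finite dimensional
modules over `A = K[t]/(t^p)` (with `K` the trivial one-dimensional module)
splits iff the Jordan type of `E` equals the Jordan type of `M` plus one
extra block `[1]`. -/
theorem statement3 {K M E : Type*} [Field K]
    [AddCommGroup M] [Module K M] [FiniteDimensional K M]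
    [AddCommGroup E] [Module K E] [FiniteDimensional K E]
    {p : ℕ} (hp : p.Prime) [CharP K p]
    (fM : M →ₗ[K] M) (fE : E →ₗ[K] E) (hfM : fM ^ p = 0) (hfE : fE ^ p = 0)
    (φ : M →ₗ[K] E) (hφ : Function.Injective φ) (hφf : fE.comp φ = φ.comp fM)
    (ψ : E →ₗ[K] K) (hψ : Function.Surjective ψ) (hψf : ψ.comp fE = 0)
    (hex : LinearMap.range φ = LinearMap.ker ψ)
    (a : ℕ → ℕ) (ha : HasJordanType p fM a) :
    (∃ s : K →ₗ[K] E, ψ.comp s = LinearMap.id ∧ fE.comp s = 0) ↔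
      HasJordanType p fE (fun i => if i = 1 then a 1 + 1 else a i) :=
  statement3_general hp fM fE φ hφ hφf ψ hex a ha
end

section
/- For p ≥ 5, let a = 3[2], b = [3] + 3[1], c = [2] be Jordan types (partitions) regarded as modules over the restricted enveloping algebra of a one-dimensional Lie algebra, with tensor product of Jordan types given by the Clebsch–Gordan rule modulo p. Then rank(t on a) = 3 > rank(t on b) = 2, while a ⊗ c = 3[3] + 3[1] and b ⊗ c = [4] + 4[2], so rank(t on a⊗c) = 6 < rank(t on b⊗c) = 7. In particular, a ≥ b in rank of t does not imply rank(t on a⊗c) ≥ rank(t on b⊗c). -/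
/-- Rank of `t` on a Jordan type `∑ᵢ a i [i]` (parts of size `1,…,p`):
`∑_{i≥2} a i * (i-1)`. -/
def rkOne (p : ℕ) (a : ℕ → ℕ) : ℕ := ∑ i ∈ Finset.Icc 1 p, a i * (i - 1)

/-- Multiplicity of the block `[l]` in `[m] ⊗ [n]` according to the
Clebsch–Gordan rule: `[m] ⊗ [n] = [n+m-1] + [n+m-3] + ⋯ + [|n-m|+1]`
(valid for `m + n ≤ p + 1`). -/
def cgBlock (m n l : ℕ) : ℕ :=
  if max m n - min m n + 1 ≤ l ∧ l ≤ m + n - 1 ∧ (l + m + n) % 2 = 1 then 1 else 0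

/-- Tensor product of Jordan types, extended bilinearly from the
Clebsch–Gordan rule for single blocks. -/
def cgTensor (p : ℕ) (a b : ℕ → ℕ) : ℕ → ℕ :=
  fun l => ∑ m ∈ Finset.Icc 1 p, ∑ n ∈ Finset.Icc 1 p, a m * b n * cgBlock m n l

/-! Writing Jordan types as sums of `Pi.single k x` (`x` copies of `[k]`), both rank and tensor
product are additive, so everything reduces to the Clebsch–Gordan rules `[1] ⊗ [n] = [n]` and
`[m] ⊗ [2] = [m + 1] + [m - 1]`; all blocks that occur have size at most `4 ≤ p`. -/

open Finset

section JordanTypes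

variable {p : ℕ}

lemma ite_eq_single {ι M : Type*} [DecidableEq ι] [Zero M] (i : ι) (x : M) :
    (fun k => if k = i then x else 0) = Pi.single i x :=
  funext fun k => (Pi.single_apply i x k).symm

lemma ite_ite_eq_single_add_single {ι M : Type*} [DecidableEq ι] [AddZeroClass M] {i j : ι}
    (hij : i ≠ j) (x y : M) :
    (fun k => if k = i then x else if k = j then y else 0) = Pi.single i x + Pi.single j y := by
  funext k
  simp only [Pi.add_apply, Pi.single_apply]
  split_ifs <;> simp_all

lemma rkOne_add (a b : ℕ → ℕ) : rkOne p (a + b) = rkOne p a + rkOne p b := by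
  simp only [rkOne, Pi.add_apply, add_mul, sum_add_distrib]

lemma rkOne_single {k : ℕ} (hk : k ∈ Icc 1 p) (x : ℕ) :
    rkOne p (Pi.single k x) = x * (k - 1) := by
  rw [rkOne, sum_eq_single_of_mem k hk fun i _ hi => by simp [hi], Pi.single_eq_same]

lemma cgTensor_add_left (a b c : ℕ → ℕ) :
    cgTensor p (a + b) c = cgTensor p a c + cgTensor p b c := by
  funext l
  simp only [cgTensor, Pi.add_apply, add_mul, sum_add_distrib]

lemma cgTensor_single_single {m n : ℕ} (hm : m ∈ Icc 1 p) (hn : n ∈ Icc 1 p) (x y : ℕ) :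
    cgTensor p (Pi.single m x) (Pi.single n y) = (x * y) • cgBlock m n := by
  funext l
  rw [cgTensor, sum_eq_single_of_mem m hm fun i _ hi => by simp [hi],
    sum_eq_single_of_mem n hn fun j _ hj => by simp [hj]]
  simp

lemma cgBlock_one_left {n : ℕ} (hn : 0 < n) : cgBlock 1 n = Pi.single n 1 := by
  funext l
  simp only [cgBlock, Pi.single_apply]
  split_ifs <;> omega

lemma cgBlock_two_right {m : ℕ} (hm : 2 ≤ m) :
    cgBlock m 2 = Pi.single (m + 1) 1 + Pi.single (m - 1) 1 := by
  funext l
  simp only [cgBlock, Pi.add_apply, Pi.single_apply]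
  split_ifs <;> omega

end JordanTypes

theorem statement5_general (p : ℕ) (hp5 : 5 ≤ p)
    (a b c : ℕ → ℕ)
    (ha : a = fun i => if i = 2 then 3 else 0)
    (hb : b = fun i => if i = 3 then 1 else if i = 1 then 3 else 0)
    (hc : c = fun i => if i = 2 then 1 else 0) :
    rkOne p a = 3 ∧ rkOne p b = 2 ∧
    (∀ l ∈ Finset.Icc 1 p,
      cgTensor p a c l = (fun i => if i = 3 then 3 else if i = 1 then 3 else 0 : ℕ → ℕ) l) ∧
    (∀ l ∈ Finset.Icc 1 p,
      cgTensor p b c l = (fun i => if i = 4 then 1 else if i = 2 then 4 else 0 : ℕ → ℕ) l) ∧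
    rkOne p (cgTensor p a c) = 6 ∧ rkOne p (cgTensor p b c) = 7 := by
  have mem (k : ℕ) (hk : 1 ≤ k ∧ k ≤ 4 := by norm_num) : k ∈ Icc 1 p :=
    mem_Icc.2 ⟨hk.1, by omega⟩
  rw [ite_eq_single] at ha hc
  rw [ite_ite_eq_single_add_single (by norm_num)] at hb
  have hac : cgTensor p a c = Pi.single 3 3 + Pi.single 1 3 := by
    rw [ha, hc, cgTensor_single_single (mem 2) (mem 2), cgBlock_two_right le_rfl]
    ext l
    simp only [Pi.add_apply, Pi.smul_apply, smul_eq_mul, Pi.single_apply]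
    split_ifs <;> omega
  have hbc : cgTensor p b c = Pi.single 4 1 + Pi.single 2 4 := by
    rw [hb, hc, cgTensor_add_left, cgTensor_single_single (mem 3) (mem 2),
      cgTensor_single_single (mem 1) (mem 2), cgBlock_two_right (by norm_num),
      cgBlock_one_left (by norm_num)]
    ext l
    simp only [Pi.add_apply, Pi.smul_apply, smul_eq_mul, Pi.single_apply]
    split_ifs <;> omega
  refine ⟨?_, ?_, fun l _ => ?_, fun l _ => ?_, ?_, ?_⟩
  · rw [ha, rkOne_single (mem 2)]
  · rw [hb, rkOne_add, rkOne_single (mem 3), rkOne_single (mem 1)]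
  · rw [hac, ← ite_ite_eq_single_add_single (by norm_num)]
  · rw [hbc, ← ite_ite_eq_single_add_single (by norm_num)]
  · rw [hac, rkOne_add, rkOne_single (mem 3), rkOne_single (mem 1)]
  · rw [hbc, rkOne_add, rkOne_single (mem 4), rkOne_single (mem 2)]

/-- for `p ≥ 5`, with Jordan types `a = 3[2]`, `b = [3] + 3[1]`,
`c = [2]`, one has `rank(t,a) = 3 > 2 = rank(t,b)`, while
`a ⊗ c = 3[3] + 3[1]` and `b ⊗ c = [4] + 4[2]` (Clebsch–Gordan), so
`rank(t, a⊗c) = 6 < 7 = rank(t, b⊗c)`. -/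
theorem statement5 (p : ℕ) (hp : p.Prime) (hp5 : 5 ≤ p)
    (a b c : ℕ → ℕ)
    (ha : a = fun i => if i = 2 then 3 else 0)
    (hb : b = fun i => if i = 3 then 1 else if i = 1 then 3 else 0)
    (hc : c = fun i => if i = 2 then 1 else 0) :
    rkOne p a = 3 ∧ rkOne p b = 2 ∧
    (∀ l ∈ Finset.Icc 1 p,
      cgTensor p a c l = (fun i => if i = 3 then 3 else if i = 1 then 3 else 0 : ℕ → ℕ) l) ∧
    (∀ l ∈ Finset.Icc 1 p,
      cgTensor p b c l = (fun i => if i = 4 then 1 else if i = 2 then 4 else 0 : ℕ → ℕ) l) ∧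
    rkOne p (cgTensor p a c) = 6 ∧ rkOne p (cgTensor p b c) = 7 :=
  statement5_general p hp5 a b c ha hb hc
end

section
/- Let M be a finite dimensional k[t]/(t^p)-module of dimension m. If every Jordan block of M has size p (i.e. M is free, of Jordan type m' [p] with m = p·m'), then for every other module N of dimension m whose Jordan type is not m'[p], and for every j with 1 ≤ j < p, rank(t^j on M) > rank(t^j on N). -/
open Finset

theorem finrank_range_extendByZero_comp_funLeft {R ι κ : Type*} [Field R] [Fintype κ]
    {σ τ : κ → ι} (hσ : Function.Injective σ) (hτ : Function.Injective τ) :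
    Module.finrank R (LinearMap.range
      ((Function.ExtendByZero.linearMap R σ).comp (LinearMap.funLeft R R τ))) =
      Fintype.card κ := by
  rw [LinearMap.range_comp_of_range_eq_top _
      (LinearMap.range_eq_top.2 (LinearMap.funLeft_surjective_of_injective R R τ hτ)),
    LinearMap.finrank_range_of_inj (Function.extend_injective hσ (0 : ι → R)),
    Module.finrank_fintype_fun_eq_card]

/-- The paper's `∑_{i=j+1}^p b_i (i - j)`; at `j = 0` it is the dimension `∑ b_i i`. -/
def jordanRank (p : ℕ) (b : ℕ → ℕ) (j : ℕ) : ℕ :=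
  ∑ n ∈ Icc 1 p, b n * (n - j)

theorem sum_fin_succ_eq_sum_Icc (p : ℕ) (h : ℕ → ℕ) :
    ∑ i : Fin p, h (i + 1) = ∑ n ∈ Icc 1 p, h n := by
  rw [Fin.sum_univ_eq_sum_range (fun i => h (i + 1)), range_eq_Ico, sum_Ico_add' h,
    zero_add, Ico_add_one_right_eq_Icc]

section JordanModel

variable {k : Type*} [Field k] (p : ℕ) (a : ℕ → ℕ) (j : ℕ)

theorem jordanShift_pow_apply (g : JordanCarrier k p a) (x : JordanIdx p a) :
    (jordanShift k p a ^ j) g x =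
      if h : (x.2.2 : ℕ) + j ≤ x.1 then g ⟨x.1, x.2.1, ⟨x.2.2 + j, by omega⟩⟩ else 0 := by
  induction j generalizing g with
  | zero => rw [dif_pos (by omega)]; rfl
  | succ j ih =>
    rw [pow_succ, Module.End.mul_apply, ih]
    simp only [jordanShift, LinearMap.coe_mk, AddHom.coe_mk]
    split_ifs <;> first | rfl | omega

/-- Positions `(i, c, s)` with `s + j` still inside block `i`: `t^j` moves the coordinate at
`survivorSource y` to `survivorTarget y` and kills every other coordinate. -/
abbrev JordanSurvivorIdx : Type :=
  Σ i : Fin p, Fin (a ((i : ℕ) + 1)) × Fin ((i : ℕ) + 1 - j)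

def survivorTarget (y : JordanSurvivorIdx p a j) : JordanIdx p a :=
  ⟨y.1, y.2.1, ⟨y.2.2, by omega⟩⟩

def survivorSource (y : JordanSurvivorIdx p a j) : JordanIdx p a :=
  ⟨y.1, y.2.1, ⟨y.2.2 + j, by omega⟩⟩

theorem survivorTarget_injective : Function.Injective (survivorTarget p a j) := by
  rintro ⟨i, c, s⟩ ⟨i', c', s'⟩ h
  simp only [survivorTarget, Sigma.mk.inj_iff] at h
  obtain ⟨rfl, h⟩ := h
  simp_all [Fin.ext_iff]

theorem survivorSource_injective : Function.Injective (survivorSource p a j) := by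
  rintro ⟨i, c, s⟩ ⟨i', c', s'⟩ h
  simp only [survivorSource, Sigma.mk.inj_iff] at h
  obtain ⟨rfl, h⟩ := h
  simp_all [Fin.ext_iff]

theorem jordanShift_pow_eq :
    jordanShift k p a ^ j = (Function.ExtendByZero.linearMap k (survivorTarget p a j)).comp
      (LinearMap.funLeft k k (survivorSource p a j)) := by
  refine LinearMap.ext fun g => funext fun ⟨i, c, s⟩ => ?_
  rw [jordanShift_pow_apply]
  simp only [LinearMap.comp_apply, Function.ExtendByZero.linearMap_apply]
  split_ifs with h
  · exact ((survivorTarget_injective p a j).extend_apply (fun y => g (survivorSource p a j y))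
      0 ⟨i, c, ⟨s, by omega⟩⟩).symm
  · refine (Function.extend_apply' _ (0 : JordanCarrier k p a) _ ?_).symm
    rintro ⟨⟨i', c', s'⟩, he⟩
    simp only [survivorTarget, Sigma.mk.inj_iff] at he
    obtain ⟨rfl, he⟩ := he
    simp only [heq_eq_eq, Prod.mk.injEq, Fin.ext_iff] at he
    have := s'.isLt
    omega

theorem finrank_range_jordanShift_pow :
    Module.finrank k (LinearMap.range (jordanShift k p a ^ j)) = jordanRank p a j := by
  rw [jordanShift_pow_eq, finrank_range_extendByZero_comp_funLeft
    (survivorTarget_injective p a j) (survivorSource_injective p a j)]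
  simp [jordanRank, ← sum_fin_succ_eq_sum_Icc]

end JordanModel

namespace HasJordanType

variable {k V : Type*} [Field k] [AddCommGroup V] [Module k V] {p : ℕ} {f : V →ₗ[k] V}
  {a : ℕ → ℕ}

theorem finrank_range_pow (h : HasJordanType p f a) (j : ℕ) :
    Module.finrank k (LinearMap.range (f ^ j)) = jordanRank p a j := by
  obtain ⟨e, he⟩ := h
  have hconj : jordanShift k p a = e.conjAlgEquiv k f :=
    LinearMap.ext fun w => by simpa using (he (e.symm w)).symm
  rw [← finrank_range_jordanShift_pow (k := k), hconj, ← map_pow, LinearEquiv.conjAlgEquiv_apply,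
    LinearMap.range_comp, LinearMap.range_comp_of_range_eq_top _ e.symm.range]
  exact (e.finrank_map_eq _).symm

theorem finrank_eq (h : HasJordanType p f a) : Module.finrank k V = jordanRank p a 0 := by
  rw [← h.finrank_range_pow 0, pow_zero, Module.End.one_eq_id, LinearMap.range_id, finrank_top]

end HasJordanType

theorem mul_sub_le_sub_mul {p j n : ℕ} (hn : n ≤ p) : p * (n - j) ≤ (p - j) * n := by
  rcases le_total n j with hnj | hjn
  · simp [Nat.sub_eq_zero_of_le hnj]
  obtain ⟨d, rfl⟩ := Nat.exists_eq_add_of_le hjn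
  obtain ⟨e, rfl⟩ := Nat.exists_eq_add_of_le hn
  simp only [Nat.add_sub_cancel_left, Nat.add_assoc]
  nlinarith

theorem mul_sub_lt_sub_mul {p j n : ℕ} (hj : 0 < j) (hjp : j < p) (hn : 0 < n) (hnp : n < p) :
    p * (n - j) < (p - j) * n := by
  rcases le_total n j with hnj | hjn
  · simp [Nat.sub_eq_zero_of_le hnj]; omega
  obtain ⟨d, rfl⟩ := Nat.exists_eq_add_of_le hjn
  obtain ⟨e, rfl⟩ := Nat.exists_eq_add_of_lt hnp
  simp only [Nat.add_sub_cancel_left, Nat.add_assoc]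
  nlinarith

theorem jordanRank_free {p : ℕ} (hp : 0 < p) (m' j : ℕ) :
    jordanRank p (fun n => if n = p then m' else 0) j = m' * (p - j) := by
  simp only [jordanRank, ite_mul, zero_mul, sum_ite_eq', mem_Icc]
  rw [if_pos ⟨hp, le_rfl⟩]

theorem exists_small_block_of_ne_free {p m' : ℕ} {b : ℕ → ℕ} (hp : 0 < p)
    (hdim : jordanRank p b 0 = m' * p)
    (hb : ∃ n ∈ Icc 1 p, b n ≠ if n = p then m' else 0) :
    ∃ n ∈ Ico 1 p, b n ≠ 0 := by
  by_contra! hsmall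
  have hdim' : jordanRank p b 0 = b p * p := by
    refine (sum_eq_single_of_mem p (mem_Icc.2 ⟨hp, le_rfl⟩) fun n hn hnp => ?_).trans rfl
    rw [hsmall n (mem_Ico.2 ⟨(mem_Icc.1 hn).1, lt_of_le_of_ne (mem_Icc.1 hn).2 hnp⟩), zero_mul]
  have hbp : b p = m' := Nat.eq_of_mul_eq_mul_right hp (hdim'.symm.trans hdim)
  obtain ⟨n, hn, hne⟩ := hb
  rcases (mem_Icc.1 hn).2.lt_or_eq with hnp | rfl
  · exact hne (by rw [if_neg hnp.ne, hsmall n (mem_Ico.2 ⟨(mem_Icc.1 hn).1, hnp⟩)])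
  · exact hne (by rw [if_pos rfl, hbp])

theorem jordanRank_lt_of_ne_free {p m' j : ℕ} {b : ℕ → ℕ} (hj : 1 ≤ j) (hjp : j < p)
    (hdim : jordanRank p b 0 = m' * p)
    (hb : ∃ n ∈ Icc 1 p, b n ≠ if n = p then m' else 0) :
    jordanRank p b j < m' * (p - j) := by
  obtain ⟨n₀, hn₀, hbn₀⟩ := exists_small_block_of_ne_free (by omega) hdim hb
  obtain ⟨hn₀1, hn₀p⟩ := mem_Ico.1 hn₀
  refine Nat.lt_of_mul_lt_mul_left (a := p) ?_
  calc p * jordanRank p b j = ∑ n ∈ Icc 1 p, b n * (p * (n - j)) := by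
        rw [jordanRank, mul_sum]; exact sum_congr rfl fun n _ => by ring
    _ < ∑ n ∈ Icc 1 p, b n * ((p - j) * n) := by
        refine sum_lt_sum (fun n hn => Nat.mul_le_mul_left _ ?_) ⟨n₀, ?_, ?_⟩
        · exact mul_sub_le_sub_mul (mem_Icc.1 hn).2
        · exact mem_Icc.2 ⟨hn₀1, hn₀p.le⟩
        · exact Nat.mul_lt_mul_of_pos_left (mul_sub_lt_sub_mul hj hjp hn₀1 hn₀p)
            (Nat.pos_of_ne_zero hbn₀)
    _ = (p - j) * jordanRank p b 0 := by
        rw [jordanRank, mul_sum]; exact sum_congr rfl fun n _ => by rw [Nat.sub_zero]; ring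
    _ = p * (m' * (p - j)) := by rw [hdim]; ring

theorem statement7_general {k M N : Type*} [Field k]
    [AddCommGroup M] [Module k M]
    [AddCommGroup N] [Module k N]
    {p : ℕ}
    (f : M →ₗ[k] M) (g : N →ₗ[k] N)
    (m' : ℕ) (hM : HasJordanType p f (fun i => if i = p then m' else 0))
    (b : ℕ → ℕ) (hN : HasJordanType p g b)
    (hdim : Module.finrank k N = Module.finrank k M)
    (hb : ∃ i ∈ Finset.Icc 1 p, b i ≠ (if i = p then m' else 0))
    (j : ℕ) (hj1 : 1 ≤ j) (hj2 : j < p) :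
    Module.finrank k (LinearMap.range (g ^ j)) <
      Module.finrank k (LinearMap.range (f ^ j)) := by
  have hp : 0 < p := by omega
  have hdimN : jordanRank p b 0 = m' * p := by
    rw [← hN.finrank_eq, hdim, hM.finrank_eq, jordanRank_free hp, Nat.sub_zero]
  rw [hN.finrank_range_pow, hM.finrank_range_pow, jordanRank_free hp]
  exact jordanRank_lt_of_ne_free hj1 hj2 hdimN hb

/-- if `M` is a free `k[t]/(t^p)`-module of dimension `m = p·m'`
(Jordan type `m'[p]`) and `N` is a module of the same dimension whose Jordan
type is not `m'[p]`, then `rank(t^j, N) < rank(t^j, M)` for every `1 ≤ j < p`. -/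
theorem statement7 {k M N : Type*} [Field k]
    [AddCommGroup M] [Module k M] [FiniteDimensional k M]
    [AddCommGroup N] [Module k N] [FiniteDimensional k N]
    {p : ℕ} (hp : p.Prime) [CharP k p]
    (f : M →ₗ[k] M) (g : N →ₗ[k] N) (hf : f ^ p = 0) (hg : g ^ p = 0)
    (m' : ℕ) (hM : HasJordanType p f (fun i => if i = p then m' else 0))
    (b : ℕ → ℕ) (hN : HasJordanType p g b)
    (hdim : Module.finrank k N = Module.finrank k M)
    (hb : ∃ i ∈ Finset.Icc 1 p, b i ≠ (if i = p then m' else 0))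
    (j : ℕ) (hj1 : 1 ≤ j) (hj2 : j < p) :
    Module.finrank k (LinearMap.range (g ^ j)) <
      Module.finrank k (LinearMap.range (f ^ j)) :=
  statement7_general f g m' hM b hN hdim hb j hj1 hj2
end

section
/- Let A = k[x,y]/(x^p, y^p) and let u = x - y^2 and v = x in A. Then for every finite dimensional A-module M, the element u acts freely on M (i.e. M restricted to k[u]/(u^p) is free) if and only if v acts freely on M. (In other words, the π-points t ↦ x and t ↦ x - y^2 of E = (Z/p)^2 are equivalent.) -/
open MvPolynomial in
/-- The defining ideal `(x^p, y^p)` of `kE = k[x,y]/(x^p, y^p)`. -/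
noncomputable def kEIdeal (k : Type*) [Field k] (p : ℕ) : Ideal (MvPolynomial (Fin 2) k) :=
  Ideal.span {(X 0 : MvPolynomial (Fin 2) k) ^ p, (X 1 : MvPolynomial (Fin 2) k) ^ p}

/-- The group algebra `kE = k[x,y]/(x^p, y^p)` of `E = (ℤ/p)²`. -/
abbrev kE (k : Type*) [Field k] (p : ℕ) : Type _ :=
  MvPolynomial (Fin 2) k ⧸ kEIdeal k p

/-- An element `w` of a `k`-algebra `A` acts freely on an `A`-module `M` if
`M` is free as a module over `k[w] ≅ k[t]/(t^p)`, i.e. the Jordan type of the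
action of `w` on `M` consists only of blocks of size `p`. -/
def ActsFreely (k : Type*) [Field k] (p : ℕ) {A : Type*} [CommRing A] [Algebra k A]
    (w : A) (M : Type*) [AddCommGroup M] [Module A M] [Module k M]
    [IsScalarTower k A M] : Prop :=
  ∃ n : ℕ, HasJordanType p ((LinearMap.lsmul A M w).restrictScalars k)
    (fun i => if i = p then n else 0)

section OneOperator

open LinearMap

variable {R V : Type*} [Ring R] [AddCommGroup V] [Module R V]

theorem ker_pow_le_range_pow_sub {f : Module.End R V} {p : ℕ}
    (h : ker f ≤ range (f ^ (p - 1))) {j : ℕ} (hj : j ≤ p) :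
    ker (f ^ j) ≤ range (f ^ (p - j)) := by
  induction j with
  | zero => rw [pow_zero, Module.End.one_eq_id, ker_id]; exact bot_le
  | succ j ih =>
    intro v hv
    have hfv : f v ∈ ker (f ^ j) := by
      rwa [mem_ker, ← Module.End.mul_apply, ← pow_succ]
    obtain ⟨u, hu⟩ := ih (by omega) hfv
    have hpow : f ^ (p - j) = f * f ^ (p - (j + 1)) := by
      rw [← pow_succ', show p - (j + 1) + 1 = p - j by omega]
    have hrest : v - (f ^ (p - (j + 1))) u ∈ ker f := by
      rw [mem_ker, map_sub, ← Module.End.mul_apply, ← hpow, hu, sub_self]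
    obtain ⟨u', hu'⟩ := h hrest
    refine ⟨(f ^ j) u' + u, ?_⟩
    rw [map_add, ← Module.End.mul_apply, ← pow_add, show p - (j + 1) + j = p - 1 by omega, hu',
      sub_add_cancel]

end OneOperator

section FreeModel

open LinearMap

variable (k : Type*) [Field k]

abbrev freeBlocks (p n : ℕ) : ℕ → ℕ := fun i => if i = p then n else 0

def freeShift (ι : Type*) (p : ℕ) : Module.End k (ι × Fin p → k) where
  toFun g x := if h : (x.2 : ℕ) + 1 < p then g (x.1, ⟨x.2 + 1, h⟩) else 0
  map_add' g₁ g₂ := by funext x; dsimp; split <;> simp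
  map_smul' c g := by funext x; dsimp; split <;> simp

variable {k}

theorem freeShift_pow_apply {ι : Type*} {p : ℕ} (m : ℕ) (g : ι × Fin p → k)
    (x : ι × Fin p) :
    (freeShift k ι p ^ m) g x =
      if h : (x.2 : ℕ) + m < p then g (x.1, ⟨x.2 + m, h⟩) else 0 := by
  induction m generalizing g with
  | zero => simp
  | succ m ih =>
    rw [pow_succ, Module.End.mul_apply, ih]
    simp only [freeShift, LinearMap.coe_mk, AddHom.coe_mk]
    split_ifs <;> first | rfl | omega

theorem ker_freeShift_le_range_pow {ι : Type*} {p : ℕ} :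
    ker (freeShift k ι p) ≤ range (freeShift k ι p ^ (p - 1)) := by
  intro g hg
  refine ⟨fun x => if h : (x.2 : ℕ) + 1 = p then g (x.1, ⟨0, by omega⟩) else 0,
    funext fun x => ?_⟩
  obtain ⟨c, j⟩ := x
  rw [freeShift_pow_apply]
  dsimp only
  rcases Nat.eq_zero_or_pos (j : ℕ) with hj | hj
  · rw [dif_pos (by omega), dif_pos (by omega)]
    exact congrArg g (Prod.ext rfl (Fin.ext hj.symm))
  · have hprev := congrFun (mem_ker.mp hg) (c, ⟨j - 1, by omega⟩)
    simp only [freeShift, LinearMap.coe_mk, AddHom.coe_mk, Pi.zero_apply,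
      show (j : ℕ) - 1 + 1 = j by omega, j.isLt, dif_pos] at hprev
    rw [dif_neg (by omega), ← hprev]

theorem jordanIdx_freeBlocks_fst {p n : ℕ} (x : JordanIdx p (freeBlocks p n)) :
    (x.1 : ℕ) + 1 = p := by
  by_contra h
  have := x.2.1.isLt
  simp only [freeBlocks, if_neg h] at this
  omega

def freeBlocksIdxEquiv {p : ℕ} (n : ℕ) (hp : 0 < p) :
    Fin n × Fin p ≃ JordanIdx p (freeBlocks p n) where
  toFun y := ⟨⟨p - 1, by omega⟩, Fin.cast (by simp [Nat.sub_add_cancel hp]) y.1,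
      Fin.cast (Nat.sub_add_cancel hp).symm y.2⟩
  invFun x := (Fin.cast (by simp [jordanIdx_freeBlocks_fst x]) x.2.1,
      Fin.cast (jordanIdx_freeBlocks_fst x) x.2.2)
  left_inv y := rfl
  right_inv := by
    rintro ⟨⟨i, hi⟩, c, j⟩
    obtain rfl : i = p - 1 := by
      have := jordanIdx_freeBlocks_fst ⟨⟨i, hi⟩, c, j⟩
      dsimp at this; omega
    rfl

variable (k) in
def freeBlocksCarrierEquiv {p : ℕ} (n : ℕ) (hp : 0 < p) :
    (Fin n × Fin p → k) ≃ₗ[k] JordanCarrier k p (freeBlocks p n) :=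
  LinearEquiv.funCongrLeft k k (freeBlocksIdxEquiv n hp).symm

theorem freeBlocksCarrierEquiv_freeShift {p n : ℕ} (hp : 0 < p) (g : Fin n × Fin p → k) :
    freeBlocksCarrierEquiv k n hp (freeShift k (Fin n) p g) =
      jordanShift k p (freeBlocks p n) (freeBlocksCarrierEquiv k n hp g) := by
  funext ⟨⟨i, hi⟩, c, j⟩
  obtain rfl : i = p - 1 := by
    have := jordanIdx_freeBlocks_fst ⟨⟨i, hi⟩, c, j⟩
    dsimp at this; omega
  simp only [freeBlocksCarrierEquiv, LinearEquiv.funCongrLeft_apply, LinearMap.funLeft_apply,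
    freeShift, jordanShift, LinearMap.coe_mk, AddHom.coe_mk, freeBlocksIdxEquiv,
    Equiv.coe_fn_symm_mk, Fin.val_cast]
  split_ifs <;> first | rfl | omega

theorem hasJordanType_freeBlocks_iff {V : Type*} [AddCommGroup V] [Module k V] {p : ℕ}
    (hp : 0 < p) (f : Module.End k V) (n : ℕ) :
    HasJordanType p f (freeBlocks p n) ↔
      ∃ e : V ≃ₗ[k] (Fin n × Fin p → k), ∀ v, e (f v) = freeShift k (Fin n) p (e v) := by
  set E := freeBlocksCarrierEquiv k n hp
  constructor
  · rintro ⟨e, he⟩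
    refine ⟨e.trans E.symm, fun v => E.injective ?_⟩
    rw [LinearEquiv.trans_apply, LinearEquiv.trans_apply, freeBlocksCarrierEquiv_freeShift,
      E.apply_symm_apply, E.apply_symm_apply, he]
  · rintro ⟨e, he⟩
    refine ⟨e.trans E, fun v => ?_⟩
    rw [LinearEquiv.trans_apply, LinearEquiv.trans_apply, he, freeBlocksCarrierEquiv_freeShift]

end FreeModel

section Freeness

open LinearMap

variable {k V : Type*} [Field k] [AddCommGroup V] [Module k V]

theorem ker_le_range_pow_of_intertwining {W : Type*} [AddCommGroup W] [Module k W]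
    (e : V ≃ₗ[k] W) {f : Module.End k V} {S : Module.End k W} (he : ∀ v, e (f v) = S (e v))
    {m : ℕ} (hS : ker S ≤ range (S ^ m)) : ker f ≤ range (f ^ m) := by
  have hpow : ∀ j v, e ((f ^ j) v) = (S ^ j) (e v) := by
    intro j
    induction j with
    | zero => simp
    | succ j ih =>
      intro v
      rw [pow_succ', pow_succ', Module.End.mul_apply, Module.End.mul_apply, he, ih]
  intro v hv
  obtain ⟨u, hu⟩ := hS (show e v ∈ ker S by rw [mem_ker, ← he, mem_ker.mp hv, map_zero])
  exact ⟨e.symm u, e.injective (by rw [hpow, e.apply_symm_apply, hu])⟩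

theorem HasJordanType.ker_le_range_pow {f : Module.End k V} {p n : ℕ} (hp : 0 < p)
    (h : HasJordanType p f (freeBlocks p n)) : ker f ≤ range (f ^ (p - 1)) := by
  obtain ⟨e, he⟩ := (hasJordanType_freeBlocks_iff hp f n).mp h
  exact ker_le_range_pow_of_intertwining e he ker_freeShift_le_range_pow

end Freeness

section JordanChains

open LinearMap Module Submodule

variable {k V ι : Type*} [Field k] [AddCommGroup V] [Module k V]
  {f : Module.End k V} {p : ℕ} {W : Submodule k V}

/-- Position `j` of the chain over `b c` holds `f^(p-1-j) (b c)`, so `f` moves position `j` to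
`j - 1`, as `freeShift` does on coordinates. -/
noncomputable def jordanChains (f : Module.End k V) (p : ℕ) (b : Basis ι k W) :
    ι × Fin p → V :=
  fun i => (f ^ (p - 1 - i.2)) (b i.1)

theorem linearIndependent_jordanChains [Fintype ι] (hfp : f ^ p = 0)
    (hW : Disjoint W (ker (f ^ (p - 1)))) (b : Basis ι k W) :
    LinearIndependent k (jordanChains f p b) := by
  rw [Fintype.linearIndependent_iff]
  intro g hg
  let U : Fin p → W := fun j => ∑ c, g (c, j) • b c
  have hsum : ∑ j : Fin p, (f ^ (p - 1 - (j : ℕ))) (U j : V) = 0 := by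
    rw [← hg, Fintype.sum_prod_type_right]
    simp [U, jordanChains, map_sum, map_smul]
  -- descending induction: `f^j` kills the positions below `j`
  have hU : ∀ j, U j = 0 := by
    intro j
    induction hd : p - 1 - (j : ℕ) using Nat.strong_induction_on generalizing j with
    | _ d ih =>
      have hlater : ∀ j' : Fin p, j < j' → U j' = 0 := fun j' hj' => ih _ (by omega) j' rfl
      have hker : (f ^ (p - 1)) (U j : V) = 0 := by
        have := congrArg (f ^ (j : ℕ)) hsum
        rw [map_sum, map_zero, Finset.sum_eq_single j] at this
        · rwa [← Module.End.mul_apply, ← pow_add,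
            show (j : ℕ) + (p - 1 - j) = p - 1 by omega] at this
        · intro j' _ hne
          rcases lt_or_gt_of_ne hne with hlt | hgt
          · rw [← Module.End.mul_apply, ← pow_add, pow_eq_zero_of_le (by omega) hfp,
              LinearMap.zero_apply]
          · rw [hlater j' hgt, ZeroMemClass.coe_zero, map_zero, map_zero]
        · simp
      exact Subtype.ext (disjoint_def.mp hW _ (U j).2 hker)
  intro ⟨c, j⟩
  exact Fintype.linearIndependent_iff.mp b.linearIndependent _ (hU j) c

theorem top_le_span_jordanChains [Fintype ι] (hp : 0 < p) (hfp : f ^ p = 0)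
    (hker : ker f ≤ range (f ^ (p - 1))) (hW : Codisjoint W (ker (f ^ (p - 1))))
    (b : Basis ι k W) :
    ⊤ ≤ span k (Set.range (jordanChains f p b)) := by
  have hchain : ∀ (w : W) {i : ℕ}, i < p →
      (f ^ i) (w : V) ∈ span k (Set.range (jordanChains f p b)) := by
    intro w i hi
    rw [← b.sum_repr w, Submodule.coe_sum, map_sum]
    refine sum_mem fun c _ => ?_
    rw [Submodule.coe_smul, map_smul]
    exact smul_mem _ _ (subset_span ⟨(c, ⟨p - 1 - i, by omega⟩), by
      simp [jordanChains, show p - 1 - (p - 1 - i) = i by omega]⟩)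
  have hrange : ker (f ^ (p - 1)) ≤ range f := by
    simpa [Nat.sub_sub_self hp] using ker_pow_le_range_pow_sub hker (j := p - 1) (by omega)
  have key : ∀ j, j ≤ p →
      range (f ^ (p - j)) ≤ span k (Set.range (jordanChains f p b)) := by
    intro j
    induction j with
    | zero => simp [hfp]
    | succ j ih =>
      intro hj
      rintro _ ⟨u, rfl⟩
      -- `u = w + z` with `w ∈ W` and `z ∈ ker f^(p-1) ⊆ range f`
      obtain ⟨w, hw, z, hz, rfl⟩ :=
        mem_sup.mp (hW.eq_top ▸ mem_top : u ∈ W ⊔ ker (f ^ (p - 1)))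
      obtain ⟨z', rfl⟩ := hrange hz
      rw [map_add]
      refine add_mem (hchain ⟨w, hw⟩ (by omega)) (ih (by omega) ⟨z', ?_⟩)
      rw [← Module.End.mul_apply, ← pow_succ, show p - (j + 1) + 1 = p - j by omega]
  simpa [Module.End.one_eq_id] using key p le_rfl

theorem apply_jordanChains (hfp : f ^ p = 0) (b : Basis ι k W) (c : ι) (j : Fin p) :
    f (jordanChains f p b (c, j)) =
      if h : 0 < (j : ℕ) then jordanChains f p b (c, ⟨j - 1, by omega⟩) else 0 := by
  simp only [jordanChains, ← Module.End.mul_apply, ← pow_succ']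
  split_ifs with h
  · congr 3; omega
  · rw [show p - 1 - j + 1 = p by omega, hfp, LinearMap.zero_apply]

theorem equivFun_apply_eq_freeShift [Finite ι] (hfp : f ^ p = 0) (b : Basis ι k W)
    (c : Basis (ι × Fin p) k V) (hc : ⇑c = jordanChains f p b) (v : V) :
    c.equivFun (f v) = freeShift k ι p (c.equivFun v) := by
  classical
  have : c.equivFun.toLinearMap ∘ₗ f = freeShift k ι p ∘ₗ c.equivFun.toLinearMap := by
    refine c.ext fun ⟨c₀, j⟩ => funext fun ⟨c', j'⟩ => ?_
    simp only [LinearMap.comp_apply, LinearEquiv.coe_coe, hc, apply_jordanChains hfp]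
    rw [← hc]
    simp only [freeShift, LinearMap.coe_mk, AddHom.coe_mk, Basis.equivFun_apply]
    split_ifs <;> simp [Finsupp.single_apply, Prod.ext_iff, Fin.ext_iff] <;> grind
  exact LinearMap.congr_fun this v

theorem exists_hasJordanType_freeBlocks [FiniteDimensional k V] (hp : 0 < p) (hfp : f ^ p = 0)
    (hker : ker f ≤ range (f ^ (p - 1))) : ∃ n, HasJordanType p f (freeBlocks p n) := by
  obtain ⟨W, hW⟩ := (ker (f ^ (p - 1))).exists_isCompl
  let b := Module.finBasis k W
  let c := Basis.mk (linearIndependent_jordanChains hfp hW.symm.disjoint b)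
    (top_le_span_jordanChains hp hfp hker hW.symm.codisjoint b)
  exact ⟨_, (hasJordanType_freeBlocks_iff hp f _).2
    ⟨c.equivFun, equivFun_apply_eq_freeShift hfp b c (funext <| Basis.mk_apply _ _)⟩⟩

end JordanChains

section ModuleAction

variable {k A M : Type*} [Field k] [CommRing A] [Algebra k A] [AddCommGroup M] [Module A M]
  [Module k M] [IsScalarTower k A M] {p : ℕ}

theorem ActsFreely.exists_pow_pred_smul_eq (hp : 0 < p) {w : A} (h : ActsFreely k p w M) {m : M}
    (hm : w • m = 0) : ∃ m', w ^ (p - 1) • m' = m := by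
  obtain ⟨n, hn⟩ := h
  obtain ⟨m', hm'⟩ := HasJordanType.ker_le_range_pow (f := Algebra.lsmul k k M w) hp hn hm
  exact ⟨m', by rwa [← map_pow] at hm'⟩

theorem actsFreely_of_forall_exists_pow_pred_smul_eq [FiniteDimensional k M] (hp : 0 < p) {w : A}
    (hw : w ^ p = 0) (h : ∀ m : M, w • m = 0 → ∃ m', w ^ (p - 1) • m' = m) :
    ActsFreely k p w M :=
  exists_hasJordanType_freeBlocks (f := Algebra.lsmul k k M w) hp
    (by rw [← map_pow, hw, map_zero]) fun m hm => by simpa [← map_pow] using h m hm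

end ModuleAction

section CharP

open Finset

variable {A : Type*} [CommRing A] {p : ℕ} [hp : Fact p.Prime] [CharP A p]

theorem natCast_choose_pred {i : ℕ} (hi : i < p) : (((p - 1).choose i : ℕ) : A) = (-1) ^ i := by
  induction i with
  | zero => simp
  | succ i ih =>
    have hpascal := Nat.choose_succ_succ' (p - 1) i
    rw [Nat.sub_add_cancel hp.out.one_le] at hpascal
    have hzero : ((p.choose (i + 1) : ℕ) : A) = 0 :=
      (CharP.cast_eq_zero_iff A p _).mpr (hp.out.dvd_choose_self i.succ_ne_zero hi)
    rw [hpascal, Nat.cast_add, ih (by omega)] at hzero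
    rw [pow_succ, mul_neg_one, eq_neg_of_add_eq_zero_right hzero]

theorem add_pow_pred_char (a b : A) :
    (a + b) ^ (p - 1) = ∑ i ∈ range p, (-b) ^ i * a ^ (p - 1 - i) := by
  rw [add_comm, add_pow, Nat.sub_add_cancel hp.out.one_le]
  refine sum_congr rfl fun i hi => ?_
  rw [natCast_choose_pred (mem_range.mp hi), neg_pow]
  ring

theorem add_pow_pred_char_of_pow_eq_zero {s : ℕ} (hs : s ≤ p) {a b : A} (hb : b ^ s = 0) :
    (a + b) ^ (p - 1) = a ^ (p - s) * ∑ i ∈ range s, (-b) ^ i * a ^ (s - 1 - i) := by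
  have hnb : (-b) ^ s = 0 := by rw [neg_pow, hb, mul_zero]
  rw [add_pow_pred_char, ← sum_range_add_sum_Ico _ hs, mul_sum, sum_eq_zero (s := Ico s p)
    fun i hi => by rw [pow_eq_zero_of_le (mem_Ico.mp hi).1 hnb, zero_mul], add_zero]
  refine sum_congr rfl fun i hi => ?_
  rw [show p - 1 - i = (p - s) + (s - 1 - i) by have := mem_range.mp hi; omega, pow_add]
  ring

end CharP

section SmallPerturbation

open Finset LinearMap

variable {A M : Type*} [CommRing A] [AddCommGroup M] [Module A M] {p s : ℕ} {a b : A}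

theorem exists_pow_smul_eq_of_pow_smul_eq_zero
    (ha : ∀ m : M, a • m = 0 → ∃ m', a ^ (p - 1) • m' = m) {j : ℕ} (hj : j ≤ p)
    {m : M} (hm : a ^ j • m = 0) : ∃ m', a ^ (p - j) • m' = m := by
  have hker : ker (Algebra.lsmul A A M a) ≤ range (Algebra.lsmul A A M a ^ (p - 1)) :=
    fun m hm => by simpa [← map_pow] using ha m hm
  simpa [← map_pow] using ker_pow_le_range_pow_sub hker hj (by simpa [← map_pow] using hm)

theorem pow_smul_eq_neg_pow_smul {m : M} (hm : (a + b) • m = 0) (j : ℕ) :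
    a ^ j • m = (-b) ^ j • m := by
  obtain ⟨d, hd⟩ := sub_dvd_pow_sub_pow a (-b) j
  rw [← sub_eq_zero, ← sub_smul, hd, sub_neg_eq_add, mul_comm, mul_smul, hm, smul_zero]

theorem exists_eq_pow_pred_smul_add (hs : s ≤ p) (hbs : b ^ s = 0)
    (hab : (a + b) ^ (p - 1) = a ^ (p - s) * ∑ i ∈ range s, (-b) ^ i * a ^ (s - 1 - i))
    (ha : ∀ m : M, a • m = 0 → ∃ m', a ^ (p - 1) • m' = m) {m : M}
    (hm : (a + b) • m = 0) :
    ∃ m₂ κ, (a + b) • κ = 0 ∧ m = (a + b) ^ (p - 1) • m₂ + (-b) ^ (p - s) • κ := by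
  set c := ∑ i ∈ range s, (-b) ^ i * a ^ (s - 1 - i)
  have hc : (a + b) * c = a ^ s := by
    have := geom_sum₂_mul (-b) a s
    rw [neg_pow, hbs, mul_zero, zero_sub] at this
    linear_combination -this
  obtain ⟨m₁, rfl⟩ := exists_pow_smul_eq_of_pow_smul_eq_zero ha hs
    (by rw [pow_smul_eq_neg_pow_smul hm, neg_pow, hbs, mul_zero, zero_smul])
  obtain ⟨m₂, hm₂⟩ := exists_pow_smul_eq_of_pow_smul_eq_zero ha (p.sub_le s)
    (m := (a + b) • m₁) (by rwa [smul_comm])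
  rw [Nat.sub_sub_self hs] at hm₂
  have hκ : (a + b) • (m₁ - c • m₂) = 0 := by
    rw [smul_sub, smul_smul, hc, hm₂, sub_self]
  refine ⟨m₂, m₁ - c • m₂, hκ, ?_⟩
  rw [← pow_smul_eq_neg_pow_smul hκ, hab, mul_smul, ← smul_add, add_sub_cancel]

theorem exists_pow_pred_smul_eq_of_add (hs : s ≤ p) (hbs : b ^ s = 0)
    (hb : b ^ (2 * (p - s)) = 0)
    (hab : (a + b) ^ (p - 1) = a ^ (p - s) * ∑ i ∈ range s, (-b) ^ i * a ^ (s - 1 - i))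
    (ha : ∀ m : M, a • m = 0 → ∃ m', a ^ (p - 1) • m' = m) {m : M}
    (hm : (a + b) • m = 0) :
    ∃ m', (a + b) ^ (p - 1) • m' = m := by
  obtain ⟨m₂, κ, hκ, rfl⟩ := exists_eq_pow_pred_smul_add hs hbs hab ha hm
  obtain ⟨m₂', κ', -, rfl⟩ := exists_eq_pow_pred_smul_add hs hbs hab ha hκ
  have hnb : (-b) ^ (p - s) * (-b) ^ (p - s) = 0 := by
    rw [← pow_add, ← two_mul, neg_pow, hb, mul_zero]
  refine ⟨m₂ + (-b) ^ (p - s) • m₂', ?_⟩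
  rw [smul_add, smul_add, smul_smul _ _ κ', hnb, zero_smul, add_zero, smul_comm]

end SmallPerturbation

theorem ActsFreely.add {k A M : Type*} [Field k] [CommRing A] [Algebra k A] [AddCommGroup M]
    [Module A M] [Module k M] [IsScalarTower k A M] [FiniteDimensional k M] {p : ℕ}
    [hp : Fact p.Prime] [CharP A p] {a b : A} {s : ℕ} (hs : s ≤ p) (hbs : b ^ s = 0)
    (hb : b ^ (2 * (p - s)) = 0) (hab : (a + b) ^ p = 0) (h : ActsFreely k p a M) :
    ActsFreely k p (a + b) M :=
  actsFreely_of_forall_exists_pow_pred_smul_eq hp.out.pos hab fun _ hm =>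
    exists_pow_pred_smul_eq_of_add hs hbs hb (add_pow_pred_char_of_pow_eq_zero hs hbs)
      (fun _ => h.exists_pow_pred_smul_eq hp.out.pos) hm

open MvPolynomial in
theorem kEIdeal_ne_top {k : Type*} [Field k] {p : ℕ} (hp : p ≠ 0) : kEIdeal k p ≠ ⊤ := by
  intro htop
  have hle : kEIdeal k p ≤ RingHom.ker (constantCoeff (σ := Fin 2) (R := k)) := by
    rw [kEIdeal, Ideal.span_le]
    rintro _ (rfl | rfl) <;> simp [hp]
  simpa using hle (htop ▸ Submodule.mem_top : (1 : MvPolynomial (Fin 2) k) ∈ kEIdeal k p)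

instance {k : Type*} [Field k] {p : ℕ} [hp : Fact p.Prime] [CharP k p] : CharP (kE k p) p :=
  have := Ideal.Quotient.nontrivial_iff.mpr (kEIdeal_ne_top (k := k) hp.out.ne_zero)
  charP_of_injective_algebraMap' k p

open MvPolynomial in
/-- in `A = k[x,y]/(x^p, y^p)`, for every finite dimensional
`A`-module `M`, the element `u = x - y²` acts freely on `M` iff `v = x` acts
freely on `M` (the π-points `t ↦ x` and `t ↦ x - y²` are equivalent). -/
theorem statement10 {k : Type*} [Field k] {p : ℕ} (hp : p.Prime) [CharP k p]
    (x y : kE k p)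
    (hx : x = Ideal.Quotient.mk (kEIdeal k p) (X 0))
    (hy : y = Ideal.Quotient.mk (kEIdeal k p) (X 1))
    (M : Type*) [AddCommGroup M] [Module (kE k p) M] [Module k M]
    [IsScalarTower k (kE k p) M] [FiniteDimensional k M] :
    ActsFreely k p (x - y ^ 2) M ↔ ActsFreely k p x M := by
  have : Fact p.Prime := ⟨hp⟩
  have hxp : x ^ p = 0 := by
    rw [hx, ← map_pow, Ideal.Quotient.eq_zero_iff_mem]
    exact Ideal.subset_span (Set.mem_insert _ _)
  have hyp : y ^ p = 0 := by
    rw [hy, ← map_pow, Ideal.Quotient.eq_zero_iff_mem]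
    exact Ideal.subset_span (Set.mem_insert_of_mem _ rfl)
  have hy2 : ∀ {j}, p ≤ 2 * j → (y ^ 2) ^ j = 0 := fun hj => by
    rw [← pow_mul]; exact pow_eq_zero_of_le hj hyp
  have hneg_y2 : ∀ {j}, p ≤ 2 * j → (-y ^ 2) ^ j = 0 := fun {j} hj =>
    (neg_pow (y ^ 2) j).trans (by rw [hy2 hj, mul_zero])
  have hup : (x - y ^ 2) ^ p = 0 := by
    rw [sub_pow_char, hxp, ← pow_mul, pow_eq_zero_of_le (by omega) hyp, sub_zero]
  have hs : p ≤ 2 * ((p + 1) / 2) := by omega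
  have hps : p ≤ 2 * (2 * (p - (p + 1) / 2)) := by have := hp.two_le; omega
  constructor
  · intro h
    simpa using h.add (by omega) (hy2 hs) (hy2 hps) (by simpa using hxp)
  · intro h
    simpa [← sub_eq_add_neg] using
      h.add (by omega) (hneg_y2 hs) (hneg_y2 hps) (by rwa [← sub_eq_add_neg])
end

section
/- Let G be a group, k a field of characteristic p, M a finite dimensional kG-module, and ζ ∈ H^1(G, M) with corresponding extension 0 → M → E_ζ → k → 0. For any flat algebra map α: K[t]/(t^p) → KG (K/k a field extension), the pulled back class α^*(ζ_K) ∈ H^1(K[t]/(t^p), M_K) vanishes if and only if rank(α(t) on E_{ζ,K}) = rank(α(t) on M_K). -/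
/-!
Write `u` for the action on `M` and on `E`. Since `φ` is `u`-equivariant, `φ (u M) ⊆ u E`, and `φ`
is injective, so the two ranks agree exactly when `u E = φ (u M)`. Choosing `e` with `ψ e = 1` we
have `E = φ M + K e`, so `u E = φ (u M)` says `u e = u (φ m)` for some `m`; this is exactly what
makes `c ↦ c • (e - φ m)` a section of `ψ` killed by `u`.
-/

open Polynomial LinearMap

section Intertwining

variable {R M E : Type*} [CommRing R] [AddCommGroup M] [AddCommGroup E] [Module R M] [Module R E]
  {φ : M →ₗ[R] E} {g : Module.End R M} {f : Module.End R E}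

theorem map_range_le_range_of_comp_eq (h : f ∘ₗ φ = φ ∘ₗ g) : (range g).map φ ≤ range f := by
  rintro _ ⟨_, ⟨m, rfl⟩, rfl⟩
  exact ⟨φ m, LinearMap.congr_fun h m⟩

theorem exists_section_comp_eq_zero_iff_range_le {ψ : E →ₗ[R] R} (hψ : Function.Surjective ψ)
    (hex : range φ = ker ψ) (h : f ∘ₗ φ = φ ∘ₗ g) :
    (∃ s : R →ₗ[R] E, ψ ∘ₗ s = LinearMap.id ∧ f ∘ₗ s = 0) ↔ range f ≤ (range g).map φ := by
  have hψφ (m : M) : ψ (φ m) = 0 := by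
    rw [← mem_ker, ← hex]
    exact mem_range_self φ m
  constructor
  · rintro ⟨s, hs, hfs⟩ _ ⟨x, rfl⟩
    have hx : x - s (ψ x) ∈ range φ := by
      rw [hex, mem_ker, map_sub, ← comp_apply ψ s, hs, id_apply, sub_self]
    obtain ⟨m, hm⟩ := hx
    refine ⟨g m, mem_range_self g m, ?_⟩
    rw [← comp_apply φ g, ← h, comp_apply, hm, map_sub, ← comp_apply f s, hfs, LinearMap.zero_apply,
      sub_zero]
  · intro hle
    obtain ⟨e, he⟩ := hψ 1
    obtain ⟨_, ⟨m, rfl⟩, hm⟩ := hle (mem_range_self f e)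
    refine ⟨toSpanSingleton R E (e - φ m), ?_, ?_⟩
    · ext
      simp [he, hψφ]
    · ext
      rw [comp_apply, toSpanSingleton_apply, one_smul, map_sub, ← hm, ← comp_apply f φ, h,
        comp_apply, sub_self, LinearMap.zero_apply]

end Intertwining

theorem finrank_range_eq_iff_range_le_map {K M E : Type*} [Field K] [AddCommGroup M]
    [AddCommGroup E] [Module K M] [Module K E] [FiniteDimensional K E] {φ : M →ₗ[K] E}
    {g : Module.End K M} {f : Module.End K E} (hφ : Function.Injective φ)
    (h : f ∘ₗ φ = φ ∘ₗ g) :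
    Module.finrank K (range f) = Module.finrank K (range g) ↔ range f ≤ (range g).map φ := by
  have hrank : Module.finrank K ((range g).map φ) = Module.finrank K (range g) :=
    (Submodule.equivMapOfInjective φ hφ _).finrank_eq.symm
  constructor
  · intro hf
    exact (Submodule.eq_of_le_of_finrank_eq (map_range_le_range_of_comp_eq h)
      (hrank.trans hf.symm)).ge
  · intro hle
    rw [le_antisymm hle (map_range_le_range_of_comp_eq h), hrank]

theorem statement13_general {K : Type} [Field K]
    {G : Type} [Group G] {M E : Type} [AddCommGroup M] [AddCommGroup E]
    [Module (MonoidAlgebra K G) M] [Module (MonoidAlgebra K G) E]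
    [Module K M] [Module K E]
    [IsScalarTower K (MonoidAlgebra K G) M] [IsScalarTower K (MonoidAlgebra K G) E]
    [FiniteDimensional K E]
    -- the extension 0 → M → E → K → 0 of KG-modules
    (φ : M →ₗ[MonoidAlgebra K G] E) (hφ : Function.Injective φ)
    (ψ : E →ₗ[K] K) (hψ : Function.Surjective ψ)
    (hex : LinearMap.range (φ.restrictScalars K) = LinearMap.ker ψ)
    (u : MonoidAlgebra K G) :
    (∃ s : K →ₗ[K] E, ψ.comp s = LinearMap.id ∧ ∀ c : K, u • s c = 0) ↔
      Module.finrank K (LinearMap.range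
          (Algebra.lsmul K K E u)) =
        Module.finrank K (LinearMap.range
          (Algebra.lsmul K K M u)) := by
  have h : Algebra.lsmul K K E u ∘ₗ φ.restrictScalars K =
      φ.restrictScalars K ∘ₗ Algebra.lsmul K K M u :=
    LinearMap.ext fun m => (φ.map_smul u m).symm
  rw [finrank_range_eq_iff_range_le_map hφ h,
    ← exists_section_comp_eq_zero_iff_range_le hψ hex h]
  simp only [LinearMap.ext_iff, comp_apply, Algebra.lsmul_coe, LinearMap.zero_apply]

/-- let `G` be a group, `K` a field of characteristic `p`, `M` a
finite dimensional `KG`-module, and `ζ ∈ H¹(G, M)` a cohomology class, given by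
its corresponding extension `0 → M → E_ζ → K → 0` of `KG`-modules (`K` the
trivial module, on which `KG` acts through the augmentation).  Let
`α : K[t]/(t^p) → KG` be a flat `K`-algebra map (a π-point) and `u = α(t)`.
Since `H¹(K[t]/(t^p), M_K)` classifies extensions, `α^*(ζ)` vanishes iff the
restricted extension splits, i.e. iff there is a linear section `s` of `ψ`
with `u • s = 0`; the claim is that this happens iff
`rank(u, E_ζ) = rank(u, M)`. -/
theorem statement13 {p : ℕ} (hp : p.Prime) {K : Type} [Field K] [CharP K p]
    {G : Type} [Group G] {M E : Type} [AddCommGroup M] [AddCommGroup E]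
    [Module (MonoidAlgebra K G) M] [Module (MonoidAlgebra K G) E]
    [Module K M] [Module K E]
    [IsScalarTower K (MonoidAlgebra K G) M] [IsScalarTower K (MonoidAlgebra K G) E]
    [FiniteDimensional K M] [FiniteDimensional K E]
    -- the extension 0 → M → E → K → 0 of KG-modules
    (φ : M →ₗ[MonoidAlgebra K G] E) (hφ : Function.Injective φ)
    (ψ : E →ₗ[K] K) (hψ : Function.Surjective ψ)
    (hψA : ∀ (a : MonoidAlgebra K G) (x : E),
      ψ (a • x) = (MonoidAlgebra.lift K K G 1 : MonoidAlgebra K G →ₐ[K] K) a • ψ x)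
    (hex : LinearMap.range (φ.restrictScalars K) = LinearMap.ker ψ)
    -- the π-point α : K[t]/(t^p) → KG, a flat map of K-algebras, and u = α(t)
    (α : AdjoinRoot (X ^ p : K[X]) →ₐ[K] MonoidAlgebra K G)
    (hflat : letI : Module (AdjoinRoot (X ^ p : K[X])) (MonoidAlgebra K G) :=
        Module.compHom (MonoidAlgebra K G) α.toRingHom
      Module.Flat (AdjoinRoot (X ^ p : K[X])) (MonoidAlgebra K G))
    (u : MonoidAlgebra K G) (hu : u = α (AdjoinRoot.root _)) :
    (∃ s : K →ₗ[K] E, ψ.comp s = LinearMap.id ∧ ∀ c : K, u • s c = 0) ↔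
      Module.finrank K (LinearMap.range
          (Algebra.lsmul K K E u)) =
        Module.finrank K (LinearMap.range
          (Algebra.lsmul K K M u)) :=
  statement13_general φ hφ ψ hψ hex u
end

section
/- Let Θ be a component of the stable Auslander–Reiten quiver of a finite group scheme G over an algebraically closed field, and suppose there exist a function d_i(α) ≥ 0 on π-points (1 ≤ i ≤ p) and f(M) > 0 on modules in Θ such that the Jordan type of α^*(M) is sum_{i<p} d_i(α) f(M) [i] + (1/p)(dim M − d_p(α) f(M)) [p] for all π-points α and all M in Θ. Then for any two modules M, N in Θ, any j with 1 ≤ j ≤ p−1, and any two π-points α, β: rank(α(t)^j, M) > rank(β(t)^j, M) implies rank(α(t)^j, N) > rank(β(t)^j, N). In particular the non-maximal j-rank loci of M and N coincide. -/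
/-- The `j`-rank of a module in an AR-component, computed from Farnsteiner's
data: multiplicities `aᵢ = dᵢ(α)·f(M)` for `i < p` and
`a_p = (dim M - d_p(α)·f(M))/p`, giving
`rank = ∑_{j<i<p} dᵢ(α) f(M) (i - j) + (dim M - d_p(α) f(M))/p · (p - j)`. -/
noncomputable def arRank (p j : ℕ) (d : ℕ → ℚ) (f dimM : ℚ) : ℚ :=
  (∑ i ∈ Finset.Ico (j + 1) p, d i * f * ((i : ℚ) - j)) +
    (dimM - d p * f) / p * ((p : ℚ) - j)

/-! As a function of `f(M)` and `dim M`, the `j`-rank is affine: the coefficient of `f(M)`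
depends only on the π-point, and the remaining term `dim M / p · (p - j)` not at all. Comparing
two π-points on the same module therefore compares only these coefficients, scaled by
`f(M) > 0`, and the outcome is the same for every module of the component. -/

def arRankSlope (p j : ℕ) (d : ℕ → ℚ) : ℚ :=
  (∑ i ∈ Finset.Ico (j + 1) p, d i * ((i : ℚ) - j)) - d p / p * ((p : ℚ) - j)

theorem arRank_eq_mul_arRankSlope_add (p j : ℕ) (d : ℕ → ℚ) (f dimM : ℚ) :
    arRank p j d f dimM = f * arRankSlope p j d + dimM / p * ((p : ℚ) - j) := by
  have hsum : ∑ i ∈ Finset.Ico (j + 1) p, d i * f * ((i : ℚ) - j)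
      = f * ∑ i ∈ Finset.Ico (j + 1) p, d i * ((i : ℚ) - j) := by
    rw [Finset.mul_sum]
    exact Finset.sum_congr rfl fun i _ => by ring
  rw [arRank, arRankSlope, hsum]
  ring

theorem arRank_sub_arRank (p j : ℕ) (dα dβ : ℕ → ℚ) (f dimM : ℚ) :
    arRank p j dα f dimM - arRank p j dβ f dimM
      = f * (arRankSlope p j dα - arRankSlope p j dβ) := by
  rw [arRank_eq_mul_arRankSlope_add, arRank_eq_mul_arRankSlope_add]
  ring

theorem arRank_lt_arRank_iff (p j : ℕ) (dα dβ : ℕ → ℚ) {f : ℚ} (hf : 0 < f) (dimM : ℚ) :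
    arRank p j dβ f dimM < arRank p j dα f dimM ↔ arRankSlope p j dβ < arRankSlope p j dα := by
  rw [← sub_pos, arRank_sub_arRank, mul_pos_iff_of_pos_left hf, sub_pos]

theorem statement14_general (p : ℕ) (j : ℕ)
    (dα dβ : ℕ → ℚ)
    (fM fN dimM dimN : ℚ) (hfM : 0 < fM) (hfN : 0 < fN)
    (h : arRank p j dβ fM dimM < arRank p j dα fM dimM) :
    arRank p j dβ fN dimN < arRank p j dα fN dimN :=
  (arRank_lt_arRank_iff p j dα dβ hfN dimN).2 ((arRank_lt_arRank_iff p j dα dβ hfM dimM).1 h)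

/-- (the arithmetic core of the AR-component invariance of
non-maximal `j`-rank loci).  Given Farnsteiner's data `dᵢ(α) ≥ 0` for two
π-points `α, β` and positive values `f(M), f(N)` for two modules `M, N` in the
same AR-component, if `rank(α(t)^j, M) > rank(β(t)^j, M)` then
`rank(α(t)^j, N) > rank(β(t)^j, N)`. -/
theorem statement14 (p : ℕ) (hp : p.Prime) (j : ℕ) (hj1 : 1 ≤ j) (hj2 : j ≤ p - 1)
    (dα dβ : ℕ → ℚ) (hdα : ∀ i, 0 ≤ dα i) (hdβ : ∀ i, 0 ≤ dβ i)
    (fM fN dimM dimN : ℚ) (hfM : 0 < fM) (hfN : 0 < fN)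
    (h : arRank p j dβ fM dimM < arRank p j dα fM dimM) :
    arRank p j dβ fN dimN < arRank p j dα fN dimN :=
  statement14_general p j dα dβ fM fN dimM dimN hfM hfN h
end
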